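/- arXiv:1401.6739 — 3 statements merged into one kernel-verified Lean document; each statement's English description precedes it below -/
import Mathlib

section
/- Let E: ℝᴺ → [0,∞) be smooth with E(0) = 0, with 0 the unique minimum point, D²E(0) > 0, and liminf_{|x|→∞} E(x) > 0. Then for every r > 0 there exist constants K_r, M_r > 0 such that for all λ ≥ 1, ν^λ({x : |x| ≥ r}) ≤ K_r e^{−λ M_r}, where ν^λ(dx) = Z_λ^{−1} e^{−λE(x)} dx and Z_λ = ∫ e^{−λE} dx is assumed finite. -/
open MeasureTheory

/-- Exponential concentration of the Gibbs measure `ν^λ = Z_λ⁻¹ e^{−λE} dx` outside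
any ball around the unique nondegenerate minimizer `0` of `E`. -/
theorem gibbs_tail_estimate
    (N : ℕ) (E : EuclideanSpace ℝ (Fin N) → ℝ)
    (hsm : ContDiff ℝ (⊤ : ℕ∞) E) (hnonneg : ∀ x, 0 ≤ E x) (hE0 : E 0 = 0)
    (hmin : ∀ x, x ≠ 0 → 0 < E x)
    (hhess : ∀ v : EuclideanSpace ℝ (Fin N), v ≠ 0 → 0 < iteratedFDeriv ℝ 2 E 0 ![v, v])
    (hliminf : ∃ c > (0:ℝ), ∃ R : ℝ, ∀ x, R ≤ ‖x‖ → c ≤ E x)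
    (hint : ∀ l : ℝ, 0 < l → Integrable (fun x => Real.exp (-l * E x)))
    (r : ℝ) (hr : 0 < r) :
    ∃ K M : ℝ, 0 < K ∧ 0 < M ∧ ∀ l : ℝ, 1 ≤ l →
      (∫ x in {x : EuclideanSpace ℝ (Fin N) | r ≤ ‖x‖}, Real.exp (-l * E x))
          / (∫ x, Real.exp (-l * E x))
        ≤ K * Real.exp (-l * M) := by
  obtain ⟨c, hc, R, hR⟩ := hliminf
  set R' := max R r with hR'
  -- a positive lower bound for E outside the ball of radius r
  have hm : ∃ m : ℝ, 0 < m ∧ ∀ x, r ≤ ‖x‖ → m ≤ E x := by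
    set S : Set (EuclideanSpace ℝ (Fin N)) :=
      Metric.closedBall 0 R' ∩ {x | r ≤ ‖x‖} with hS
    have hScomp : IsCompact S :=
      (isCompact_closedBall 0 R').inter_right (isClosed_le continuous_const continuous_norm)
    rcases S.eq_empty_or_nonempty with hSe | hSne
    · refine ⟨c, hc, fun x hx => hR x ?_⟩
      by_contra h
      push_neg at h
      have hxS : x ∈ S := ⟨Metric.mem_closedBall.mpr
        (by rw [dist_zero_right]; exact h.le.trans (le_max_left R r)), hx⟩
      rw [hSe] at hxS
      exact hxS
    · obtain ⟨x₀, hx₀S, hx₀min⟩ := hScomp.exists_isMinOn hSne hsm.continuous.continuousOn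
      have hx₀ne : x₀ ≠ 0 := by
        intro h
        have h2 := hx₀S.2
        rw [h] at h2
        simp at h2
        linarith
      refine ⟨min c (E x₀), lt_min hc (hmin _ hx₀ne), fun x hx => ?_⟩
      by_cases hxb : ‖x‖ ≤ R'
      · exact le_trans (min_le_right _ _)
          (hx₀min ⟨Metric.mem_closedBall.mpr (by rwa [dist_zero_right]), hx⟩)
      · exact le_trans (min_le_left _ _) (hR x (le_trans (le_max_left R r) (not_le.mp hxb).le))
  obtain ⟨m, hm0, hmE⟩ := hm
  -- a small ball around 0 where E ≤ m/2
  obtain ⟨δ, hδ0, hδ⟩ := Metric.continuousAt_iff.mp (hsm.continuous.continuousAt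
    (x := (0 : EuclideanSpace ℝ (Fin N)))) (m / 2) (by linarith)
  set B := Metric.ball (0 : EuclideanSpace ℝ (Fin N)) δ with hB
  have hEB : ∀ x ∈ B, E x ≤ m / 2 := by
    intro x hx
    have h := hδ (Metric.mem_ball.mp hx)
    rw [hE0, Real.dist_eq, sub_zero, abs_of_nonneg (hnonneg x)] at h
    linarith
  set V := (volume B).toReal with hV
  have hV0 : 0 < V := by
    have h1 := Metric.measure_ball_pos volume (0 : EuclideanSpace ℝ (Fin N)) hδ0
    have h2 : volume B ≠ ⊤ := measure_ball_lt_top.ne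
    exact ENNReal.toReal_pos h1.ne' h2
  -- lower bound for the partition function
  have hden : ∀ l : ℝ, 0 < l →
      V * Real.exp (-l * (m / 2)) ≤ ∫ x, Real.exp (-l * E x) := by
    intro l hl
    have hint_l := hint l hl
    have h1 : ∫ _x in B, Real.exp (-l * (m / 2)) ≤ ∫ x in B, Real.exp (-l * E x) := by
      apply setIntegral_mono_on
      · exact integrableOn_const measure_ball_lt_top.ne
      · exact hint_l.integrableOn
      · exact measurableSet_ball
      · intro x hx
        apply Real.exp_le_exp.mpr
        have h := hEB x hx
        nlinarith
    have h2 : ∫ x in B, Real.exp (-l * E x) ≤ ∫ x, Real.exp (-l * E x) :=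
      setIntegral_le_integral hint_l (Filter.Eventually.of_forall fun x => (Real.exp_pos _).le)
    rw [setIntegral_const, smul_eq_mul] at h1
    exact h1.trans h2
  set C := ∫ x, Real.exp (-1 * E x) with hC
  have hC0 : 0 < C := lt_of_lt_of_le (by positivity) (hden 1 one_pos)
  have hS'meas : MeasurableSet {x : EuclideanSpace ℝ (Fin N) | r ≤ ‖x‖} :=
    (isClosed_le continuous_const continuous_norm).measurableSet
  -- upper bound for the numerator
  have hnum : ∀ l : ℝ, 1 ≤ l →
      (∫ x in {x : EuclideanSpace ℝ (Fin N) | r ≤ ‖x‖}, Real.exp (-l * E x))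
        ≤ Real.exp (-(l - 1) * m) * C := by
    intro l hl
    have hintl := hint l (by linarith)
    have hint1 := hint 1 one_pos
    have h1 : (∫ x in {x : EuclideanSpace ℝ (Fin N) | r ≤ ‖x‖}, Real.exp (-l * E x))
        ≤ ∫ x in {x : EuclideanSpace ℝ (Fin N) | r ≤ ‖x‖},
            Real.exp (-(l - 1) * m) * Real.exp (-1 * E x) := by
      apply setIntegral_mono_on hintl.integrableOn ((hint1.const_mul _).integrableOn) hS'meas
      intro x hx
      rw [← Real.exp_add]
      apply Real.exp_le_exp.mpr
      have h := hmE x hx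
      nlinarith
    have h2 : (∫ x in {x : EuclideanSpace ℝ (Fin N) | r ≤ ‖x‖},
          Real.exp (-(l - 1) * m) * Real.exp (-1 * E x))
        ≤ Real.exp (-(l - 1) * m) * C := by
      rw [integral_const_mul]
      have h3 : (∫ x in {x : EuclideanSpace ℝ (Fin N) | r ≤ ‖x‖}, Real.exp (-1 * E x)) ≤ C :=
        setIntegral_le_integral hint1 (Filter.Eventually.of_forall fun x => (Real.exp_pos _).le)
      exact mul_le_mul_of_nonneg_left h3 (Real.exp_pos _).le
    exact h1.trans h2
  refine ⟨Real.exp m * C / V, m / 2, by positivity, by linarith, fun l hl => ?_⟩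
  have hl0 : (0 : ℝ) < l := by linarith
  have hD := hden l hl0
  have hDpos : 0 < ∫ x, Real.exp (-l * E x) := lt_of_lt_of_le (by positivity) hD
  rw [div_le_iff₀ hDpos]
  have key : Real.exp (-(l - 1) * m) * C
      = (Real.exp m * C / V) * Real.exp (-l * (m / 2)) * (V * Real.exp (-l * (m / 2))) := by
    have hexp : Real.exp (-(l - 1) * m)
        = Real.exp m * Real.exp (-l * (m / 2)) * Real.exp (-l * (m / 2)) := by
      rw [← Real.exp_add, ← Real.exp_add]; ring_nf
    rw [hexp]; field_simp
  calc (∫ x in {x : EuclideanSpace ℝ (Fin N) | r ≤ ‖x‖}, Real.exp (-l * E x))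
      ≤ Real.exp (-(l - 1) * m) * C := hnum l hl
    _ = (Real.exp m * C / V) * Real.exp (-l * (m / 2)) * (V * Real.exp (-l * (m / 2))) := key
    _ ≤ (Real.exp m * C / V) * Real.exp (-l * (m / 2)) * ∫ x, Real.exp (-l * E x) := by
        apply mul_le_mul_of_nonneg_left hD (by positivity)
end

section
/- Let M be a Riemannian manifold with pole y₀, with metric rotationally symmetric at y₀: in geodesic polar coordinates Ψ*g = dr² + f(r)² dΘ². Write φ(r) = log(f(r)/r). Then for z ≠ y₀ with r = d(y₀, z), the Hessian of k(z) = r²/2 satisfies ∇²_z(r²/2) = I_{T_zM} + r φ'(r) P_z^⊥, where P_z^⊥ is the orthogonal projection onto the orthogonal complement of the radial direction v_z ∈ T_zM (the vector with exp_z(v_z) = y₀). -/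
noncomputable section

set_option maxHeartbeats 1000000

open scoped RealInnerProductSpace

/-- Partial derivative in the `i`-th coordinate direction on `ℝⁿ`. -/
def pderiv (n : ℕ) (i : Fin n) (h : EuclideanSpace ℝ (Fin n) → ℝ)
    (x : EuclideanSpace ℝ (Fin n)) : ℝ :=
  fderiv ℝ h x (EuclideanSpace.single i 1)

/-- The rotationally symmetric metric `dr² + f(r)² dΘ²` written in the normal-coordinate
chart at the pole `y₀` (so `r = ‖x‖` and the radial direction is `x/‖x‖`):
`g_{ij}(x) = x_i x_j/‖x‖² + (f(‖x‖)²/‖x‖²)(δ_{ij} − x_i x_j/‖x‖²)`. -/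
def rotSymMetric (n : ℕ) (f : ℝ → ℝ) (x : EuclideanSpace ℝ (Fin n)) :
    Matrix (Fin n) (Fin n) ℝ :=
  Matrix.of fun i j =>
    x i * x j / ‖x‖ ^ 2
      + (f ‖x‖) ^ 2 / ‖x‖ ^ 2 * ((if i = j then (1:ℝ) else 0) - x i * x j / ‖x‖ ^ 2)

variable {n : ℕ}

abbrev E (n : ℕ) := EuclideanSpace ℝ (Fin n)

lemma sum_mul_self (z : E n) : ∑ k, z k * z k = ‖z‖ ^ 2 := by
  rw [← real_inner_self_eq_norm_sq, PiLp.inner_apply]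
  simp [RCLike.inner_apply, mul_comm]
  simp only [sq]

lemma innerself_hasFDerivAt (z : E n) :
    HasFDerivAt (fun y : E n => ⟪y, y⟫) (2 • (innerSL ℝ z : E n →L[ℝ] ℝ)) z := by
  have := (hasFDerivAt_id z).inner ℝ (hasFDerivAt_id z)
  refine this.congr_fderiv ?_
  ext v
  simp [real_inner_comm]
  ring

lemma norm_hasFDerivAt {z : E n} (hz : z ≠ 0) :
    HasFDerivAt (fun y : E n => ‖y‖) (‖z‖⁻¹ • (innerSL ℝ z : E n →L[ℝ] ℝ)) z := by
  have h1 := innerself_hasFDerivAt z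
  have hzn : (0:ℝ) < ‖z‖ := norm_pos_iff.mpr hz
  have h2 : HasDerivAt Real.sqrt (1 / (2 * ‖z‖)) ⟪z, z⟫ := by
    have : ⟪z, z⟫ = ‖z‖ ^ 2 := real_inner_self_eq_norm_sq z
    rw [this]
    simpa [Real.sqrt_sq hzn.le] using Real.hasDerivAt_sqrt (by positivity : (‖z‖:ℝ)^2 ≠ 0)
  have h3 : HasFDerivAt (fun y : E n => Real.sqrt ⟪y, y⟫)
      ((1 / (2 * ‖z‖)) • (2 • (innerSL ℝ z : E n →L[ℝ] ℝ))) z :=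
    HasDerivAt.comp_hasFDerivAt (f := fun y : E n => ⟪y, y⟫) z h2 h1
  have heq : (fun y : E n => Real.sqrt ⟪y, y⟫) = fun y : E n => ‖y‖ := by
    funext y
    rw [real_inner_self_eq_norm_sq, Real.sqrt_sq (norm_nonneg _)]
  rw [heq] at h3
  refine h3.congr_fderiv ?_
  ext v
  simp
  ring

lemma pderiv_normsq (z : E n) (j : Fin n) :
    pderiv n j (fun y : E n => ‖y‖ ^ 2 / 2) z = z j := by
  have h1 : HasFDerivAt (fun y : E n => ‖y‖ ^ 2 / 2) (innerSL ℝ z : E n →L[ℝ] ℝ) z := by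
    have h0 := (innerself_hasFDerivAt z).const_mul (1/2 : ℝ)
    have heq : (fun y : E n => (1/2 : ℝ) * ⟪y, y⟫) = fun y : E n => ‖y‖ ^ 2 / 2 := by
      funext y; rw [real_inner_self_eq_norm_sq]; ring
    rw [heq] at h0
    refine h0.congr_fderiv ?_
    ext v
    simp
  rw [pderiv, h1.fderiv]
  simp [EuclideanSpace.inner_single_right]

lemma pderiv_AB (A B : ℝ → ℝ) {A' B' : ℝ} {z : E n} (hz : z ≠ 0)
    (hA : HasDerivAt A A' ‖z‖) (hB : HasDerivAt B B' ‖z‖) (i j l : Fin n) :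
    pderiv n i (fun y : E n =>
        B ‖y‖ * (if j = l then (1:ℝ) else 0) + A ‖y‖ * (y j * y l)) z
      = B' * (z i / ‖z‖) * (if j = l then (1:ℝ) else 0)
        + A' * (z i / ‖z‖) * (z j * z l)
        + A ‖z‖ * ((if i = j then (1:ℝ) else 0) * z l + z j * (if i = l then (1:ℝ) else 0)) := by
  have hN := norm_hasFDerivAt hz
  have hBn : HasFDerivAt (fun y : E n => B ‖y‖)
      (B' • (‖z‖⁻¹ • (innerSL ℝ z : E n →L[ℝ] ℝ))) z :=
    HasDerivAt.comp_hasFDerivAt (f := fun y : E n => ‖y‖) z hB hN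
  have hAn : HasFDerivAt (fun y : E n => A ‖y‖)
      (A' • (‖z‖⁻¹ • (innerSL ℝ z : E n →L[ℝ] ℝ))) z :=
    HasDerivAt.comp_hasFDerivAt (f := fun y : E n => ‖y‖) z hA hN
  have hj : HasFDerivAt (fun y : E n => y j)
      (EuclideanSpace.proj j : E n →L[ℝ] ℝ) z :=
    ContinuousLinearMap.hasFDerivAt (EuclideanSpace.proj j : E n →L[ℝ] ℝ)
  have hl : HasFDerivAt (fun y : E n => y l)
      (EuclideanSpace.proj l : E n →L[ℝ] ℝ) z :=
    ContinuousLinearMap.hasFDerivAt (EuclideanSpace.proj l : E n →L[ℝ] ℝ)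
  have hjl := hj.mul hl
  have htot := (hBn.mul_const (if j = l then (1:ℝ) else 0)).add (hAn.mul hjl)
  rw [pderiv, (show HasFDerivAt (fun y : E n =>
      B ‖y‖ * (if j = l then (1:ℝ) else 0) + A ‖y‖ * (y j * y l)) _ z from htot).fderiv]
  have hsing : ∀ m : Fin n, ⟪z, (EuclideanSpace.single m (1:ℝ))⟫ = z m := by
    intro m; simpa using (EuclideanSpace.inner_single_right (𝕜 := ℝ) m 1 z)
  simp [ContinuousLinearMap.add_apply, ContinuousLinearMap.smul_apply,
    ContinuousLinearMap.smulRight_apply, hsing, EuclideanSpace.single_apply]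
  rw [apply_ite (fun L : E n →L[ℝ] ℝ => L (EuclideanSpace.single i 1))]
  simp [hsing]
  have e1 : ∀ (p q : Fin n) (c : ℝ), (if p = q then c else 0) = (if q = p then c else 0) := by
    intro p q c; simp [eq_comm]
  rw [e1 l i, e1 j i]
  split_ifs <;> ring

lemma rot_eventually (f : ℝ → ℝ) {z : E n} (hz : z ≠ 0) (j l : Fin n) :
    (fun y : E n => rotSymMetric n f y j l) =ᶠ[nhds z]
      (fun y : E n => (f ‖y‖) ^ 2 / ‖y‖ ^ 2 * (if j = l then (1:ℝ) else 0)
        + (1 / ‖y‖ ^ 2 - (f ‖y‖) ^ 2 / ‖y‖ ^ 4) * (y j * y l)) := by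
  filter_upwards [isOpen_compl_singleton.mem_nhds (by simpa using hz :
    z ∈ ({0}ᶜ : Set (E n)))] with y hy
  have hy' : ‖y‖ ≠ 0 := by
    simpa [norm_eq_zero] using (by simpa using hy : y ≠ 0)
  simp only [rotSymMetric, Matrix.of_apply]
  field_simp
  split_ifs <;> ring

lemma pderiv_entry (f : ℝ → ℝ) (hf : ContDiff ℝ (⊤ : ℕ∞) f) {z : E n} (hz : z ≠ 0) (i j l : Fin n) :
    pderiv n i (fun y => rotSymMetric n f y j l) z
      = (2 * f ‖z‖ * deriv f ‖z‖ / ‖z‖ ^ 2 - 2 * (f ‖z‖) ^ 2 / ‖z‖ ^ 3) * (z i / ‖z‖)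
          * (if j = l then (1:ℝ) else 0)
        + (-2 / ‖z‖ ^ 3 - 2 * f ‖z‖ * deriv f ‖z‖ / ‖z‖ ^ 4 + 4 * (f ‖z‖) ^ 2 / ‖z‖ ^ 5)
          * (z i / ‖z‖) * (z j * z l)
        + (1 / ‖z‖ ^ 2 - (f ‖z‖) ^ 2 / ‖z‖ ^ 4)
          * ((if i = j then (1:ℝ) else 0) * z l + z j * (if i = l then (1:ℝ) else 0)) := by
  have hr : ‖z‖ ≠ 0 := norm_ne_zero_iff.mpr hz
  have hfd : HasDerivAt f (deriv f ‖z‖) ‖z‖ :=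
    ((hf.differentiable (by simp)) ‖z‖).hasDerivAt
  have hB : HasDerivAt (fun s => (f s) ^ 2 / s ^ 2)
      (2 * f ‖z‖ * deriv f ‖z‖ / ‖z‖ ^ 2 - 2 * (f ‖z‖) ^ 2 / ‖z‖ ^ 3) ‖z‖ := by
    have := (hfd.pow 2).div (hasDerivAt_pow 2 ‖z‖) (pow_ne_zero 2 hr)
    refine this.congr_deriv ?_
    simp only [Pi.pow_apply]
    field_simp
    ring
  have hA : HasDerivAt (fun s => 1 / s ^ 2 - (f s) ^ 2 / s ^ 4)
      (-2 / ‖z‖ ^ 3 - 2 * f ‖z‖ * deriv f ‖z‖ / ‖z‖ ^ 4 + 4 * (f ‖z‖) ^ 2 / ‖z‖ ^ 5) ‖z‖ := by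
    have h1 := (hasDerivAt_const ‖z‖ (1:ℝ)).div (hasDerivAt_pow 2 ‖z‖) (pow_ne_zero 2 hr)
    have h2 := (hfd.pow 2).div (hasDerivAt_pow 4 ‖z‖) (pow_ne_zero 4 hr)
    have := h1.sub h2
    refine this.congr_deriv ?_
    simp only [Pi.pow_apply]
    field_simp
    ring
  have key := pderiv_AB (fun s => 1 / s ^ 2 - (f s) ^ 2 / s ^ 4)
    (fun s => (f s) ^ 2 / s ^ 2) hz hA hB i j l
  unfold pderiv at key ⊢
  rw [(rot_eventually f hz j l).fderiv_eq]
  exact key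

lemma rot_inv (f : ℝ → ℝ) {z : E n} (hz : z ≠ 0) (hF : f ‖z‖ ≠ 0) (k l : Fin n) :
    (rotSymMetric n f z)⁻¹ k l
      = z k * z l / ‖z‖ ^ 2
        + ‖z‖ ^ 2 / (f ‖z‖) ^ 2 * ((if k = l then (1:ℝ) else 0) - z k * z l / ‖z‖ ^ 2) := by
  have hr : ‖z‖ ≠ 0 := norm_ne_zero_iff.mpr hz
  have hinv : (rotSymMetric n f z)⁻¹ = Matrix.of (fun k l =>
      z k * z l / ‖z‖ ^ 2
        + ‖z‖ ^ 2 / (f ‖z‖) ^ 2 * ((if k = l then (1:ℝ) else 0) - z k * z l / ‖z‖ ^ 2)) := by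
    apply Matrix.inv_eq_right_inv
    ext a b
    simp only [Matrix.mul_apply, rotSymMetric, Matrix.of_apply, Matrix.one_apply]
    have expand : ∀ k : Fin n,
        (z a * z k / ‖z‖ ^ 2
            + (f ‖z‖) ^ 2 / ‖z‖ ^ 2 * ((if a = k then (1:ℝ) else 0) - z a * z k / ‖z‖ ^ 2))
          * (z k * z b / ‖z‖ ^ 2
            + ‖z‖ ^ 2 / (f ‖z‖) ^ 2 * ((if k = b then (1:ℝ) else 0) - z k * z b / ‖z‖ ^ 2))
        = (if a = k then (f ‖z‖) ^ 2 / ‖z‖ ^ 2 * (z k * z b / ‖z‖ ^ 2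
              + ‖z‖ ^ 2 / (f ‖z‖) ^ 2 * ((if k = b then (1:ℝ) else 0) - z k * z b / ‖z‖ ^ 2))
            else 0)
          + (if k = b then ‖z‖ ^ 2 / (f ‖z‖) ^ 2
                * (z a * z k / ‖z‖ ^ 2 - (f ‖z‖) ^ 2 / ‖z‖ ^ 2 * (z a * z k / ‖z‖ ^ 2))
              else 0)
          + ((1 - (f ‖z‖) ^ 2 / ‖z‖ ^ 2) * (1 - ‖z‖ ^ 2 / (f ‖z‖) ^ 2) / ‖z‖ ^ 4 * z a * z b)
              * (z k * z k) := by
      intro k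
      split_ifs <;> ring
    rw [Finset.sum_congr rfl (fun k _ => expand k)]
    rw [Finset.sum_add_distrib, Finset.sum_add_distrib, Finset.sum_ite_eq, Finset.sum_ite_eq',
      ← Finset.mul_sum, sum_mul_self]
    simp only [Finset.mem_univ, if_true]
    split_ifs with hab
    · subst hab; field_simp; ring
    · field_simp
      ring
  rw [hinv]
  rfl

lemma ite_eq_comm (p q : Fin n) (c : ℝ) :
    (if p = q then c else 0) = (if q = p then c else 0) := by
  simp [eq_comm]

lemma sum_delta_mul (k : Fin n) (e : Fin n → ℝ) :
    ∑ l, (if k = l then (1:ℝ) else 0) * e l = e k := by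
  simp only [ite_mul, one_mul, zero_mul, Finset.sum_ite_eq, Finset.mem_univ, if_true]

/-- Christoffel symbols `Γ^k_{ij} = ½ g^{kl}(∂_i g_{jl} + ∂_j g_{il} − ∂_l g_{ij})` of the
rotationally symmetric metric. -/
def christoffel (n : ℕ) (f : ℝ → ℝ) (x : EuclideanSpace ℝ (Fin n)) (k i j : Fin n) : ℝ :=
  (1/2) * ∑ l, (rotSymMetric n f x)⁻¹ k l *
    (pderiv n i (fun y => rotSymMetric n f y j l) x
      + pderiv n j (fun y => rotSymMetric n f y i l) x
      - pderiv n l (fun y => rotSymMetric n f y i j) x)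

lemma christoffel_eq (f : ℝ → ℝ) (hf : ContDiff ℝ (⊤ : ℕ∞) f) {z : E n} (hz : z ≠ 0)
    (hF : f ‖z‖ ≠ 0) (k i j : Fin n) :
    christoffel n f z k i j
      = (1 / ‖z‖ ^ 2 - f ‖z‖ * deriv f ‖z‖ / ‖z‖ ^ 3) * (if i = j then (1:ℝ) else 0) * z k
        + (deriv f ‖z‖ / (f ‖z‖ * ‖z‖) - 1 / ‖z‖ ^ 2)
            * ((if j = k then (1:ℝ) else 0) * z i + (if i = k then (1:ℝ) else 0) * z j)
        + (1 / ‖z‖ ^ 4 - 2 * deriv f ‖z‖ / (f ‖z‖ * ‖z‖ ^ 3) + f ‖z‖ * deriv f ‖z‖ / ‖z‖ ^ 5)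
            * (z i * z j * z k) := by
  have hr : ‖z‖ ≠ 0 := norm_ne_zero_iff.mpr hz
  have expand : ∀ l : Fin n, (rotSymMetric n f z)⁻¹ k l *
      (pderiv n i (fun y => rotSymMetric n f y j l) z
        + pderiv n j (fun y => rotSymMetric n f y i l) z
        - pderiv n l (fun y => rotSymMetric n f y i j) z)
      = (if k = l then (1:ℝ) else 0) *
          (‖z‖ ^ 2 / (f ‖z‖) ^ 2 *
            ((if j = l then (1:ℝ) else 0)
                * ((2 * f ‖z‖ * deriv f ‖z‖ / ‖z‖ ^ 2 - 2 * (f ‖z‖) ^ 2 / ‖z‖ ^ 3) / ‖z‖ * z i)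
              + (if i = l then (1:ℝ) else 0)
                * ((2 * f ‖z‖ * deriv f ‖z‖ / ‖z‖ ^ 2 - 2 * (f ‖z‖) ^ 2 / ‖z‖ ^ 3) / ‖z‖ * z j)
              + (if i = j then (1:ℝ) else 0)
                * ((2 * (1 / ‖z‖ ^ 2 - (f ‖z‖) ^ 2 / ‖z‖ ^ 4)
                    - (2 * f ‖z‖ * deriv f ‖z‖ / ‖z‖ ^ 2 - 2 * (f ‖z‖) ^ 2 / ‖z‖ ^ 3) / ‖z‖) * z l)
              + (-2 / ‖z‖ ^ 3 - 2 * f ‖z‖ * deriv f ‖z‖ / ‖z‖ ^ 4 + 4 * (f ‖z‖) ^ 2 / ‖z‖ ^ 5)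
                  / ‖z‖ * (z i * z j * z l)))
        + (if j = l then (1:ℝ) else 0) *
            ((1 - ‖z‖ ^ 2 / (f ‖z‖) ^ 2) / ‖z‖ ^ 2 * z k
              * ((2 * f ‖z‖ * deriv f ‖z‖ / ‖z‖ ^ 2 - 2 * (f ‖z‖) ^ 2 / ‖z‖ ^ 3) / ‖z‖ * z i)
              * z l)
        + (if i = l then (1:ℝ) else 0) *
            ((1 - ‖z‖ ^ 2 / (f ‖z‖) ^ 2) / ‖z‖ ^ 2 * z k
              * ((2 * f ‖z‖ * deriv f ‖z‖ / ‖z‖ ^ 2 - 2 * (f ‖z‖) ^ 2 / ‖z‖ ^ 3) / ‖z‖ * z j)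
              * z l)
        + ((1 - ‖z‖ ^ 2 / (f ‖z‖) ^ 2) / ‖z‖ ^ 2 * z k
            * ((if i = j then (1:ℝ) else 0)
                * (2 * (1 / ‖z‖ ^ 2 - (f ‖z‖) ^ 2 / ‖z‖ ^ 4)
                    - (2 * f ‖z‖ * deriv f ‖z‖ / ‖z‖ ^ 2 - 2 * (f ‖z‖) ^ 2 / ‖z‖ ^ 3) / ‖z‖)
              + (-2 / ‖z‖ ^ 3 - 2 * f ‖z‖ * deriv f ‖z‖ / ‖z‖ ^ 4 + 4 * (f ‖z‖) ^ 2 / ‖z‖ ^ 5)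
                  / ‖z‖ * (z i * z j)))
            * (z l * z l) := by
    intro l
    rw [rot_inv f hz hF k l, pderiv_entry f hf hz i j l, pderiv_entry f hf hz j i l,
      pderiv_entry f hf hz l i j, ite_eq_comm j i, ite_eq_comm l i, ite_eq_comm l j]
    ring
  unfold christoffel
  rw [Finset.sum_congr rfl (fun l _ => expand l)]
  rw [Finset.sum_add_distrib, Finset.sum_add_distrib, Finset.sum_add_distrib,
    sum_delta_mul k, sum_delta_mul j, sum_delta_mul i, ← Finset.mul_sum, sum_mul_self]
  generalize (if i = j then (1:ℝ) else 0) = d1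
  generalize (if j = k then (1:ℝ) else 0) = d2
  generalize (if i = k then (1:ℝ) else 0) = d3
  field_simp
  ring

lemma pderiv_proj (z : E n) (i j : Fin n) :
    pderiv n i (fun y : E n => y j) z = (if i = j then (1:ℝ) else 0) := by
  have hj : HasFDerivAt (fun y : E n => y j)
      (EuclideanSpace.proj j : E n →L[ℝ] ℝ) z :=
    ContinuousLinearMap.hasFDerivAt (EuclideanSpace.proj j : E n →L[ℝ] ℝ)
  rw [pderiv, hj.fderiv]
  simp [EuclideanSpace.single_apply, eq_comm]

/-- The covariant Hessian `(∇²k)_{ij} = ∂_i∂_j k − Γ^m_{ij} ∂_m k` of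
`k(z) = d(y₀,z)²/2 = ‖z‖²/2` in normal coordinates. -/
def hessDistSq (n : ℕ) (f : ℝ → ℝ) (x : EuclideanSpace ℝ (Fin n)) (i j : Fin n) : ℝ :=
  pderiv n i (fun y => pderiv n j (fun z : EuclideanSpace ℝ (Fin n) => ‖z‖ ^ 2 / 2) y) x
    - ∑ m, christoffel n f x m i j *
        pderiv n m (fun z : EuclideanSpace ℝ (Fin n) => ‖z‖ ^ 2 / 2) x

lemma hess_eq (f : ℝ → ℝ) (hf : ContDiff ℝ (⊤ : ℕ∞) f) {z : E n} (hz : z ≠ 0)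
    (hF : f ‖z‖ ≠ 0) (i j : Fin n) :
    hessDistSq n f z i j
      = (f ‖z‖ * deriv f ‖z‖ / ‖z‖) * (if i = j then (1:ℝ) else 0)
        + (1 / ‖z‖ ^ 2 - f ‖z‖ * deriv f ‖z‖ / ‖z‖ ^ 3) * (z i * z j) := by
  have hr : ‖z‖ ≠ 0 := norm_ne_zero_iff.mpr hz
  unfold hessDistSq
  have h1 : (fun y : E n => pderiv n j (fun w : E n => ‖w‖ ^ 2 / 2) y)
      = fun y : E n => y j := funext fun y => pderiv_normsq y j
  rw [h1, pderiv_proj]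
  have expand : ∀ m : Fin n,
      christoffel n f z m i j * pderiv n m (fun w : E n => ‖w‖ ^ 2 / 2) z
      = (if j = m then (1:ℝ) else 0)
          * ((deriv f ‖z‖ / (f ‖z‖ * ‖z‖) - 1 / ‖z‖ ^ 2) * z i * z m)
        + (if i = m then (1:ℝ) else 0)
          * ((deriv f ‖z‖ / (f ‖z‖ * ‖z‖) - 1 / ‖z‖ ^ 2) * z j * z m)
        + ((1 / ‖z‖ ^ 2 - f ‖z‖ * deriv f ‖z‖ / ‖z‖ ^ 3) * (if i = j then (1:ℝ) else 0)
            + (1 / ‖z‖ ^ 4 - 2 * deriv f ‖z‖ / (f ‖z‖ * ‖z‖ ^ 3)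
                + f ‖z‖ * deriv f ‖z‖ / ‖z‖ ^ 5) * (z i * z j)) * (z m * z m) := by
    intro m
    rw [christoffel_eq f hf hz hF m i j, pderiv_normsq]
    ring
  rw [Finset.sum_congr rfl (fun m _ => expand m)]
  rw [Finset.sum_add_distrib, Finset.sum_add_distrib,
    sum_delta_mul j, sum_delta_mul i, ← Finset.mul_sum, sum_mul_self]
  generalize (if i = j then (1:ℝ) else 0) = d1
  field_simp
  ring

lemma sum_delta_mul' (k : Fin n) (e : Fin n → ℝ) :
    ∑ l, (if l = k then (1:ℝ) else 0) * e l = e k := by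
  simp only [ite_mul, one_mul, zero_mul, Finset.sum_ite_eq', Finset.mem_univ, if_true]

/-- On a rotationally symmetric manifold with pole `y₀` and metric `dr² + f(r)² dΘ²`,
with `φ(r) = log(f(r)/r)`, the Hessian of `k(z) = d(y₀,z)²/2` at `z ≠ y₀`, viewed as a
`(1,1)`-tensor (one index raised by `g`), is `I + r φ'(r) P_z^⊥`, where `r = d(y₀,z)` and
`P_z^⊥` is the orthogonal projection onto the orthogonal complement of the radial
direction `v_z` (the vector with `exp_z(v_z) = y₀`); in normal coordinates
`(P_z^⊥)^i_j = δ_{ij} − z_i z_j/‖z‖²`. -/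
theorem hessian_dist_sq_rot_sym (n : ℕ) (f φ : ℝ → ℝ)
    (hf : ContDiff ℝ (⊤ : ℕ∞) f) (hf0 : f 0 = 0) (hf'0 : deriv f 0 = 1)
    (hfpos : ∀ r > (0:ℝ), 0 < f r)
    (hφ : ∀ r > (0:ℝ), φ r = Real.log (f r / r))
    (z : EuclideanSpace ℝ (Fin n)) (hz : z ≠ 0) (i j : Fin n) :
    (∑ l, (rotSymMetric n f z)⁻¹ i l * hessDistSq n f z l j)
      = (if i = j then (1:ℝ) else 0)
        + ‖z‖ * deriv φ ‖z‖ * ((if i = j then (1:ℝ) else 0) - z i * z j / ‖z‖ ^ 2) := by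
  have rpos : (0:ℝ) < ‖z‖ := norm_pos_iff.mpr hz
  have hr : ‖z‖ ≠ 0 := ne_of_gt rpos
  have hFpos : 0 < f ‖z‖ := hfpos ‖z‖ rpos
  have hF : f ‖z‖ ≠ 0 := ne_of_gt hFpos
  have hfd : HasDerivAt f (deriv f ‖z‖) ‖z‖ :=
    ((hf.differentiable (by simp)) ‖z‖).hasDerivAt
  -- derivative of φ
  have hφev : φ =ᶠ[nhds ‖z‖] fun s => Real.log (f s) - Real.log s := by
    filter_upwards [Ioi_mem_nhds rpos] with s hs
    have hs' : (0:ℝ) < s := hs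
    rw [hφ s hs', Real.log_div (ne_of_gt (hfpos s hs')) (ne_of_gt hs')]
  have hφ' : deriv φ ‖z‖ = deriv f ‖z‖ / f ‖z‖ - 1 / ‖z‖ := by
    rw [hφev.deriv_eq]
    have hlog : HasDerivAt (fun s => Real.log (f s) - Real.log s)
        (deriv f ‖z‖ / f ‖z‖ - 1 / ‖z‖) ‖z‖ := by
      have := (hfd.log hF).sub (Real.hasDerivAt_log hr)
      simpa [one_div] using (show HasDerivAt (fun s => Real.log (f s) - Real.log s) _ ‖z‖ from this)
    exact hlog.deriv
  have expand : ∀ l : Fin n,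
      (rotSymMetric n f z)⁻¹ i l * hessDistSq n f z l j
      = (if i = l then (1:ℝ) else 0) *
          (‖z‖ ^ 2 / (f ‖z‖) ^ 2 *
            (f ‖z‖ * deriv f ‖z‖ / ‖z‖ * (if l = j then (1:ℝ) else 0)
              + (1 / ‖z‖ ^ 2 - f ‖z‖ * deriv f ‖z‖ / ‖z‖ ^ 3) * (z l * z j)))
        + (if l = j then (1:ℝ) else 0) *
            ((1 - ‖z‖ ^ 2 / (f ‖z‖) ^ 2) / ‖z‖ ^ 2 * z i
              * (f ‖z‖ * deriv f ‖z‖ / ‖z‖) * z l)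
        + ((1 - ‖z‖ ^ 2 / (f ‖z‖) ^ 2) / ‖z‖ ^ 2 * z i
            * (1 / ‖z‖ ^ 2 - f ‖z‖ * deriv f ‖z‖ / ‖z‖ ^ 3) * z j) * (z l * z l) := by
    intro l
    rw [rot_inv f hz hF i l, hess_eq f hf hz hF l j]
    ring
  rw [Finset.sum_congr rfl (fun l _ => expand l)]
  rw [Finset.sum_add_distrib, Finset.sum_add_distrib,
    sum_delta_mul i, sum_delta_mul' j, ← Finset.mul_sum, sum_mul_self, hφ']
  have hij : (if i = j then (1:ℝ) else 0) = (if i = j then (1:ℝ) else 0) := rfl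
  generalize (if i = j then (1:ℝ) else 0) = d1
  field_simp
  ring

end
end

section
/- With W as above (matrix Jacobi field with W(0)=0, W'(0)=I, W(t) invertible for 0<t≤1), extend A(t) = tW'(t)W(t)^{−1} by A(0) = I. Then A is continuously differentiable on [0,1], A'(0) = 0, and A satisfies the Riccati-type equation A'(t) = −t R(t) − A(t)²/t + A(t)/t for 0 < t ≤ 1. -/
attribute [local instance] Matrix.normedAddCommGroup Matrix.normedSpace

/-! Since `W'' = -RW` and `W = O(t)`, also `W'' = O(t)`, so `tW' - W`, whose derivative is `tW''`,
is `O(t³)`. As `t⁻¹W → W'(0) = I`, the matrix `tW⁻¹` stays bounded and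
`A - I = t⁻¹(tW' - W)(tW⁻¹) = O(t²)`, which gives `A'(0) = 0`. For `t > 0` the Riccati equation is
the product rule together with `(W⁻¹)' = -W⁻¹W'W⁻¹`; written as `A' = -tR - t⁻¹A(A - I)` it shows
`A' = O(t)`, so `A'` is continuous at `0`. -/

open Filter Set Topology Asymptotics

section MatrixCalculus

theorem Matrix.norm_mul_le_card_mul {l m n α : Type*} [Fintype l] [Fintype m] [Fintype n]
    [NormedRing α] (X : Matrix l m α) (Y : Matrix m n α) :
    ‖X * Y‖ ≤ Fintype.card m * ‖X‖ * ‖Y‖ := by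
  refine (Matrix.norm_le_iff (by positivity)).mpr fun i j => ?_
  calc ‖∑ k, X i k * Y k j‖ ≤ ∑ k, ‖X i k‖ * ‖Y k j‖ :=
        (norm_sum_le _ _).trans (Finset.sum_le_sum fun k _ => norm_mul_le _ _)
    _ ≤ ∑ _k : m, ‖X‖ * ‖Y‖ := by
        gcongr <;> exact Matrix.norm_entry_le_entrywise_sup_norm _
    _ = Fintype.card m * ‖X‖ * ‖Y‖ := by simp [mul_assoc]

theorem Asymptotics.IsBigO.matrix_mul {ι l m n α : Type*} [Fintype l] [Fintype m] [Fintype n]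
    [NormedRing α] {F : Filter ι} {X : ι → Matrix l m α} {Y : ι → Matrix m n α}
    {u v : ι → ℝ} (hX : X =O[F] u) (hY : Y =O[F] v) :
    (fun i => X i * Y i) =O[F] fun i => u i * v i := by
  refine (IsBigO.of_bound (Fintype.card m) (Eventually.of_forall fun i => ?_)).trans
    (hX.norm_left.mul hY.norm_left)
  rw [Real.norm_eq_abs, abs_of_nonneg (by positivity), ← mul_assoc]
  exact Matrix.norm_mul_le_card_mul _ _

variable {m : Type*} [Fintype m] [DecidableEq m] {X : ℝ → Matrix m m ℝ} {X' : Matrix m m ℝ}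
  {t : ℝ}

theorem HasDerivAt.matrix_mul {Y : ℝ → Matrix m m ℝ} {Y' : Matrix m m ℝ}
    (hX : HasDerivAt X X' t) (hY : HasDerivAt Y Y' t) :
    HasDerivAt (fun s => X s * Y s) (X' * Y t + X t * Y') t := by
  let B : Matrix m m ℝ →L[ℝ] Matrix m m ℝ →L[ℝ] Matrix m m ℝ := LinearMap.toContinuousLinearMap
    (LinearMap.toContinuousLinearMap.toLinearMap ∘ₗ LinearMap.mul ℝ (Matrix m m ℝ))
  exact (B.hasDerivAt_of_bilinear (fun _ => hX) (fun _ => hY)).congr_deriv (add_comm _ _)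

theorem HasDerivAt.matrix_inv (hX : HasDerivAt X X' t) (hXt : IsUnit (X t)) :
    HasDerivAt (fun s => (X s)⁻¹) (-((X t)⁻¹ * X' * (X t)⁻¹)) t := by
  obtain ⟨d, hd⟩ := (Matrix.isUnit_iff_isUnit_det _).mp hXt
  have hdet : ContinuousAt (fun s => (X s).det) t :=
    continuous_id.matrix_det.continuousAt.comp hX.continuousAt
  have hinv : ContinuousAt (fun s => (X s)⁻¹) t := by
    refine (continuousAt_matrix_inv _ ?_).comp hX.continuousAt
    rw [← hd]
    exact NormedRing.inverse_continuousAt d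
  have hunit : ∀ᶠ s in 𝓝 t, IsUnit (X s) := by
    filter_upwards [hdet.eventually (Units.isOpen.mem_nhds ⟨d, hd⟩)] with s hs
    exact (Matrix.isUnit_iff_isUnit_det _).mpr hs
  have hslope : ∀ᶠ s in 𝓝[≠] t,
      -((X s)⁻¹ * slope X t s * (X t)⁻¹) = slope (fun s => (X s)⁻¹) t s := by
    filter_upwards [nhdsWithin_le_nhds hunit] with s hs
    have key : (X s)⁻¹ - (X t)⁻¹ = -((X s)⁻¹ * (X s - X t) * (X t)⁻¹) := by
      rw [mul_sub, sub_mul, Matrix.nonsing_inv_mul _ ((Matrix.isUnit_iff_isUnit_det _).mp hs),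
        mul_assoc, Matrix.mul_nonsing_inv _ ((Matrix.isUnit_iff_isUnit_det _).mp hXt)]
      noncomm_ring
    rw [slope_def_module, slope_def_module, key, Matrix.mul_smul, Matrix.smul_mul, smul_neg]
  refine hasDerivAt_iff_tendsto_slope.mpr <|
    (((hinv.tendsto.mono_left nhdsWithin_le_nhds).mul (hasDerivAt_iff_tendsto_slope.mp hX)).mul
      tendsto_const_nhds).neg.congr' hslope

end MatrixCalculus

theorem isBigO_pow_succ_of_hasDerivAt {E : Type*} [NormedAddCommGroup E]
    [NormedSpace ℝ E] {f f' : ℝ → E} {k : ℕ} (hf : ∀ t, HasDerivAt f (f' t) t) (hf0 : f 0 = 0)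
    (hf' : f' =O[𝓝[≥] 0] fun t => t ^ k) :
    f =O[𝓝[≥] 0] fun t => t ^ (k + 1) := by
  obtain ⟨C, hC0, hC⟩ := hf'.exists_nonneg
  obtain ⟨ε, hε, hbound⟩ := (nhdsGE_basis_Ico (0 : ℝ)).eventually_iff.mp hC.bound
  refine IsBigO.of_bound C ?_
  filter_upwards [Ico_mem_nhdsGE hε] with t ht
  have hmvt := Convex.norm_image_sub_le_of_norm_hasDerivWithin_le (C := C * ‖t ^ k‖)
    (fun u _ => (hf u).hasDerivWithinAt) (fun u hu => ?_) (convex_Icc 0 t)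
    (left_mem_Icc.mpr ht.1) (right_mem_Icc.mpr ht.1)
  · rw [hf0, sub_zero, sub_zero] at hmvt
    refine hmvt.trans_eq ?_
    rw [pow_succ, norm_mul, mul_assoc]
  · calc ‖f' u‖ ≤ C * ‖u ^ k‖ := hbound ⟨hu.1, hu.2.trans_lt ht.2⟩
      _ ≤ C * ‖t ^ k‖ := by
        rw [norm_pow, norm_pow, Real.norm_of_nonneg hu.1, Real.norm_of_nonneg ht.1]
        exact mul_le_mul_of_nonneg_left (pow_le_pow_left₀ hu.1 hu.2 k) hC0

theorem hasDerivWithinAt_zero_of_isBigO_sq {E : Type*} [NormedAddCommGroup E] [NormedSpace ℝ E]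
    {f : ℝ → E} (hf : (fun t => f t - f 0) =O[𝓝[>] 0] fun t => t ^ 2) :
    HasDerivWithinAt f 0 (Ici 0) 0 := by
  have hslope : slope f 0 =O[𝓝[>] 0] fun t => t := by
    refine ((isBigO_refl (fun t : ℝ => t⁻¹) _).smul hf).congr' ?_ ?_
    · filter_upwards with t using by simp [slope_def_module]
    · filter_upwards [self_mem_nhdsWithin] with t (ht : 0 < t)
      rw [smul_eq_mul]
      field_simp
  refine hasDerivWithinAt_iff_tendsto_slope.mpr <|
    (hslope.trans_tendsto (tendsto_id.mono_left nhdsWithin_le_nhds)).mono_left ?_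
  exact nhdsWithin_mono _ fun t ht => lt_of_le_of_ne ht.1 (Ne.symm ht.2)

theorem contDiffOn_one_of_hasDerivWithinAt {E : Type*} [NormedAddCommGroup E] [NormedSpace ℝ E]
    {f f' : ℝ → E} {s : Set ℝ} (hs : UniqueDiffOn ℝ s)
    (hf : ∀ t ∈ s, HasDerivWithinAt f (f' t) s t) (hf' : ContinuousOn f' s) :
    ContDiffOn ℝ 1 f s :=
  (contDiffOn_one_iff_derivWithin hs).mpr
    ⟨fun t ht => (hf t ht).differentiableWithinAt,
      hf'.congr fun t ht => (hf t ht).derivWithin (hs t ht)⟩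

section Riccati

variable {m : Type*} [Fintype m] {R W W' W'' A : ℝ → Matrix m m ℝ}

theorem isBigO_smul_deriv_sub_cube (hR : R =O[𝓝[≥] 0] fun _ => (1 : ℝ))
    (hW : ∀ t, HasDerivAt W (W' t) t) (hW' : ∀ t, HasDerivAt W' (W'' t) t)
    (hODE : ∀ᶠ t in 𝓝[≥] 0, W'' t = -(R t * W t)) (hW0 : W 0 = 0) :
    (fun t => t • W' t - W t) =O[𝓝[≥] 0] fun t => t ^ 3 := by
  have hWO : W =O[𝓝[≥] 0] fun t => t := by
    simpa [hW0] using (hW 0).isBigO_sub.mono nhdsWithin_le_nhds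
  have hW''O : W'' =O[𝓝[≥] 0] fun t => t :=
    (hR.matrix_mul hWO).neg_left.congr' (hODE.mono fun t h => h.symm)
      (.of_forall fun t => one_mul t)
  have hderiv : ∀ t, HasDerivAt (fun t => t • W' t - W t) (t • W'' t) t := fun t =>
    (((hasDerivAt_id t).smul (hW' t)).sub (hW t)).congr_deriv (by simp)
  refine isBigO_pow_succ_of_hasDerivAt (k := 2) hderiv (by simp [hW0]) ?_
  exact ((isBigO_refl (fun t : ℝ => t) _).smul hW''O).congr_right fun t => (sq t).symm

theorem tendsto_smul_inv_nhdsGT [DecidableEq m] (hW : HasDerivAt W 1 0) (hW0 : W 0 = 0)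
    (hinv : ∀ᶠ t in 𝓝[>] 0, IsUnit (W t)) :
    Tendsto (fun t => t • (W t)⁻¹) (𝓝[>] 0) (𝓝 1) := by
  have hslope : Tendsto (fun t => t⁻¹ • W t) (𝓝[>] 0) (𝓝 1) :=
    ((hasDerivAt_iff_tendsto_slope.mp hW).mono_left
      (nhdsWithin_mono _ fun t (ht : 0 < t) => ht.ne')).congr fun t => by
        simp [slope_def_module, hW0]
  have hinv1 : ContinuousAt (fun X : Matrix m m ℝ => X⁻¹) 1 :=
    continuousAt_matrix_inv _ (by simp)
  have hlim := hinv1.tendsto.comp hslope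
  rw [inv_one] at hlim
  refine hlim.congr' ?_
  filter_upwards [hinv, self_mem_nhdsWithin] with t hWt (ht : 0 < t)
  refine Matrix.inv_eq_left_inv ?_
  rw [smul_mul_smul_comm, mul_inv_cancel₀ ht.ne',
    Matrix.nonsing_inv_mul _ ((Matrix.isUnit_iff_isUnit_det _).mp hWt), one_smul]

theorem isBigO_sub_one_sq [DecidableEq m] (hA : ∀ᶠ t in 𝓝[>] 0, A t = t • (W' t * (W t)⁻¹))
    (hinv : ∀ᶠ t in 𝓝[>] 0, IsUnit (W t))
    (hcube : (fun t => t • W' t - W t) =O[𝓝[>] 0] fun t => t ^ 3)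
    (hbdd : (fun t => t • (W t)⁻¹) =O[𝓝[>] 0] fun _ => (1 : ℝ)) :
    (fun t => A t - 1) =O[𝓝[>] 0] fun t => t ^ 2 := by
  refine ((isBigO_refl (fun t : ℝ => t⁻¹) _).smul (hcube.matrix_mul hbdd)).congr' ?_ ?_
  · filter_upwards [hA, hinv, self_mem_nhdsWithin] with t hAt hWt (ht : 0 < t)
    rw [hAt, sub_mul, smul_mul_smul_comm, Matrix.mul_smul,
      Matrix.mul_nonsing_inv _ ((Matrix.isUnit_iff_isUnit_det _).mp hWt), smul_sub, smul_smul,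
      smul_smul, inv_mul_cancel_left₀ ht.ne', inv_mul_cancel₀ ht.ne', one_smul]
  · filter_upwards [self_mem_nhdsWithin] with t (ht : 0 < t)
    rw [smul_eq_mul]
    field_simp

/-- At `t = 0` this is `0` since `0⁻¹ = 0`, which is also the derivative of `A` at `0`. -/
noncomputable def riccatiRHS (R A : ℝ → Matrix m m ℝ) (t : ℝ) : Matrix m m ℝ :=
  -(t • R t) - t⁻¹ • (A t * A t) + t⁻¹ • A t

@[simp]
theorem riccatiRHS_zero : riccatiRHS R A 0 = 0 := by
  simp [riccatiRHS]

theorem riccatiRHS_eq [DecidableEq m] (t : ℝ) :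
    riccatiRHS R A t = -(t • R t) - t⁻¹ • (A t * (A t - 1)) := by
  rw [riccatiRHS, mul_sub, mul_one, smul_sub]
  abel

theorem hasDerivAt_smul_mul_inv [DecidableEq m] {t : ℝ} (hWt' : HasDerivAt W (W' t) t)
    (hW't : HasDerivAt W' (W'' t) t) (hODE : W'' t = -(R t * W t)) (hWt : IsUnit (W t))
    (ht : t ≠ 0) :
    HasDerivAt (fun s => s • (W' s * (W s)⁻¹))
      (riccatiRHS R (fun s => s • (W' s * (W s)⁻¹)) t) t := by
  have hWW : W t * (W t)⁻¹ = 1 :=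
    Matrix.mul_nonsing_inv _ ((Matrix.isUnit_iff_isUnit_det _).mp hWt)
  refine ((hasDerivAt_id t).smul (hW't.matrix_mul (hWt'.matrix_inv hWt))).congr_deriv ?_
  simp only [riccatiRHS]
  set P := W' t * (W t)⁻¹
  have hR : -(R t * W t) * (W t)⁻¹ = -R t := by rw [neg_mul, mul_assoc, hWW, mul_one]
  have hP : W' t * -((W t)⁻¹ * W' t * (W t)⁻¹) = -(P * P) := by
    simp only [P, mul_neg, mul_assoc]
  rw [hODE, hR, hP, smul_mul_smul_comm, smul_smul, smul_smul, id, one_smul,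
    inv_mul_cancel_left₀ ht, inv_mul_cancel₀ ht, one_smul]
  module

theorem hasDerivWithinAt_riccatiRHS_of_mem_Ioc [DecidableEq m]
    (hW : ∀ t, HasDerivAt W (W' t) t) (hW' : ∀ t, HasDerivAt W' (W'' t) t)
    (hODE : ∀ t ∈ Icc (0 : ℝ) 1, W'' t = -(R t * W t)) (hinv : ∀ t ∈ Ioc (0 : ℝ) 1, IsUnit (W t))
    (hA : ∀ t ∈ Ioc (0 : ℝ) 1, A t = t • (W' t * (W t)⁻¹)) {t : ℝ} (ht : t ∈ Ioc (0 : ℝ) 1) :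
    HasDerivWithinAt A (riccatiRHS R A t) (Icc 0 1) t := by
  have hloc : A =ᶠ[𝓝[Icc 0 1] t] fun s => s • (W' s * (W s)⁻¹) := by
    filter_upwards [inter_mem_nhdsWithin _ (Ioi_mem_nhds ht.1)] with s hs
    exact hA s ⟨hs.2, hs.1.2⟩
  have h := ((hasDerivAt_smul_mul_inv (hW t) (hW' t) (hODE t (Ioc_subset_Icc_self ht)) (hinv t ht)
    ht.1.ne').hasDerivWithinAt).congr_of_eventuallyEq hloc (hA t ht)
  exact h.congr_deriv (by simp only [riccatiRHS, hA t ht])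

theorem continuousWithinAt_riccatiRHS {s : Set ℝ} {t : ℝ} (hR : ContinuousAt R t)
    (hA : ContinuousWithinAt A s t) (ht : t ≠ 0) :
    ContinuousWithinAt (riccatiRHS R A) s t := by
  have hinv : ContinuousWithinAt (fun t : ℝ => t⁻¹) s t :=
    (continuousAt_inv₀ ht).continuousWithinAt
  exact ((continuousWithinAt_id.smul hR.continuousWithinAt).neg.sub
    (hinv.smul (hA.mul hA))).add (hinv.smul hA)

theorem tendsto_riccatiRHS_zero [DecidableEq m] (hR : R =O[𝓝[>] 0] fun _ => (1 : ℝ))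
    (hA : (fun t => A t - 1) =O[𝓝[>] 0] fun t => t ^ 2) :
    Tendsto (riccatiRHS R A) (𝓝[>] 0) (𝓝 0) := by
  have hsq : Tendsto (fun t : ℝ => t ^ 2) (𝓝[>] 0) (𝓝 0) :=
    ((continuous_pow 2).tendsto' 0 0 (by simp)).mono_left nhdsWithin_le_nhds
  have hA1 : A =O[𝓝[>] 0] fun _ => (1 : ℝ) :=
    (tendsto_sub_nhds_zero_iff.mp (hA.trans_tendsto hsq)).isBigO_one ℝ
  have hquad : (fun t => t⁻¹ • (A t * (A t - 1))) =O[𝓝[>] 0] fun t => t := by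
    refine ((isBigO_refl (fun t : ℝ => t⁻¹) _).smul (hA1.matrix_mul hA)).congr_right fun t => ?_
    rw [one_mul, sq, smul_eq_mul, ← mul_assoc, inv_mul_mul_self]
  have hlin : (fun t => t • R t) =O[𝓝[>] 0] fun t => t :=
    ((isBigO_refl (fun t : ℝ => t) _).smul hR).congr_right fun t => mul_one t
  rw [show riccatiRHS R A = _ from funext riccatiRHS_eq]
  exact (hlin.neg_left.sub hquad).trans_tendsto (tendsto_id.mono_left nhdsWithin_le_nhds)

theorem continuousOn_riccatiRHS [DecidableEq m] (hR : Continuous R)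
    (hA : ContinuousOn A (Icc 0 1)) (hA1 : (fun t => A t - 1) =O[𝓝[>] 0] fun t => t ^ 2) :
    ContinuousOn (riccatiRHS R A) (Icc 0 1) := by
  rintro t ⟨ht0, ht1⟩
  rcases ht0.eq_or_lt with rfl | hpos
  · rw [← Ioc_insert_left zero_le_one, continuousWithinAt_insert_self]
    refine ContinuousWithinAt.mono ?_ Ioc_subset_Ioi_self
    rw [ContinuousWithinAt, riccatiRHS_zero]
    exact tendsto_riccatiRHS_zero
      ((hR.continuousAt.tendsto.isBigO_one ℝ).mono nhdsWithin_le_nhds) hA1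
  · exact continuousWithinAt_riccatiRHS hR.continuousAt (hA t ⟨ht0, ht1⟩) hpos.ne'

end Riccati

theorem jacobi_riccati_general (n : ℕ)
    (R W W' W'' : ℝ → Matrix (Fin n) (Fin n) ℝ)
    (hRcont : ∀ i j, Continuous fun t => R t i j)
    (hW : ∀ t, HasDerivAt W (W' t) t)
    (hW' : ∀ t, HasDerivAt W' (W'' t) t)
    (hODE : ∀ t ∈ Set.Icc (0:ℝ) 1, W'' t = -(R t * W t))
    (hW0 : W 0 = 0) (hW'0 : W' 0 = 1)
    (hinv : ∀ t ∈ Set.Ioc (0:ℝ) 1, IsUnit (W t))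
    (A : ℝ → Matrix (Fin n) (Fin n) ℝ)
    (hA0 : A 0 = 1)
    (hA : ∀ t ∈ Set.Ioc (0:ℝ) 1, A t = t • (W' t * (W t)⁻¹)) :
    ContDiffOn ℝ 1 A (Set.Icc 0 1)
    ∧ derivWithin A (Set.Icc 0 1) 0 = 0
    ∧ ∀ t ∈ Set.Ioc (0:ℝ) 1,
        derivWithin A (Set.Icc 0 1) t
          = -(t • R t) - t⁻¹ • (A t * A t) + t⁻¹ • A t := by
  have hRc : Continuous R := continuous_matrix hRcont
  have hIoc : Ioc (0 : ℝ) 1 ∈ 𝓝[>] 0 := Ioc_mem_nhdsGT one_pos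
  have hcube := isBigO_smul_deriv_sub_cube
    ((hRc.continuousAt.tendsto.isBigO_one ℝ).mono nhdsWithin_le_nhds) hW hW'
    (eventually_of_mem (Icc_mem_nhdsGE one_pos) hODE) hW0
  have hbdd :=
    (tendsto_smul_inv_nhdsGT (hW'0 ▸ hW 0) hW0 (eventually_of_mem hIoc hinv)).isBigO_one ℝ
  have hsq : (fun t => A t - 1) =O[𝓝[>] 0] fun t => t ^ 2 :=
    isBigO_sub_one_sq (eventually_of_mem hIoc hA) (eventually_of_mem hIoc hinv)
      (hcube.mono (nhdsWithin_mono _ Ioi_subset_Ici_self)) hbdd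
  have hderiv : ∀ t ∈ Icc (0 : ℝ) 1, HasDerivWithinAt A (riccatiRHS R A t) (Icc 0 1) t := by
    rintro t ⟨ht0, ht1⟩
    rcases ht0.eq_or_lt with rfl | hpos
    · rw [riccatiRHS_zero]
      exact (hasDerivWithinAt_zero_of_isBigO_sq (by simpa [hA0] using hsq)).mono
        Icc_subset_Ici_self
    · exact hasDerivWithinAt_riccatiRHS_of_mem_Ioc hW hW' hODE hinv hA ⟨hpos, ht1⟩
  have hcont := continuousOn_riccatiRHS hRc (fun t ht => (hderiv t ht).continuousWithinAt) hsq
  have hderivWithin : ∀ t ∈ Icc (0 : ℝ) 1, derivWithin A (Icc 0 1) t = riccatiRHS R A t :=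
    fun t ht => (hderiv t ht).derivWithin (uniqueDiffOn_Icc one_pos t ht)
  refine ⟨contDiffOn_one_of_hasDerivWithinAt (uniqueDiffOn_Icc one_pos) hderiv hcont, ?_,
    fun t ht => hderivWithin t (Ioc_subset_Icc_self ht)⟩
  rw [hderivWithin 0 (left_mem_Icc.mpr zero_le_one), riccatiRHS_zero]

/-- With `W` a matrix Jacobi field (`W'' + RW = 0`, `W(0) = 0`, `W'(0) = I`, `W(t)`
invertible for `0 < t ≤ 1`), extend `A(t) = t W'(t) W(t)⁻¹` by `A(0) = I`. Then `A` is
continuously differentiable on `[0,1]`, `A'(0) = 0`, and `A` satisfies the Riccati-type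
equation `A'(t) = −t R(t) − A(t)²/t + A(t)/t` for `0 < t ≤ 1`. -/
theorem jacobi_riccati (n : ℕ)
    (R W W' W'' : ℝ → Matrix (Fin n) (Fin n) ℝ)
    (hRcont : ∀ i j, Continuous fun t => R t i j)
    (hRsymm : ∀ t ∈ Set.Icc (0:ℝ) 1, (R t).IsSymm)
    (hW : ∀ t, HasDerivAt W (W' t) t)
    (hW' : ∀ t, HasDerivAt W' (W'' t) t)
    (hODE : ∀ t ∈ Set.Icc (0:ℝ) 1, W'' t = -(R t * W t))
    (hW0 : W 0 = 0) (hW'0 : W' 0 = 1)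
    (hinv : ∀ t ∈ Set.Ioc (0:ℝ) 1, IsUnit (W t))
    (A : ℝ → Matrix (Fin n) (Fin n) ℝ)
    (hA0 : A 0 = 1)
    (hA : ∀ t ∈ Set.Ioc (0:ℝ) 1, A t = t • (W' t * (W t)⁻¹)) :
    ContDiffOn ℝ 1 A (Set.Icc 0 1)
    ∧ derivWithin A (Set.Icc 0 1) 0 = 0
    ∧ ∀ t ∈ Set.Ioc (0:ℝ) 1,
        derivWithin A (Set.Icc 0 1) t
          = -(t • R t) - t⁻¹ • (A t * A t) + t⁻¹ • A t :=
  jacobi_riccati_general n R W W' W'' hRcont hW hW' hODE hW0 hW'0 hinv A hA0 hA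
end
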